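/- A curve Z ⊂ ℝ³ projects to a curve X ⊂ ℝ² by a parallel projection if and only if there exist c₁, c₂ ∈ ℝ and an ordered triple (i,j,k) ∈ {(1,2,3),(1,3,2),(2,3,1)} such that X is affinely equivalent (under the group A(2) of invertible affine transformations of ℝ²) to the Zariski closure of {(z_i + c₁ z_k, z_j + c₂ z_k) : (z₁,z₂,z₃) ∈ Z}. -/

import Mathlib

open Matrix

noncomputable section

/-- Zariski closure of a subset of `ℝⁿ`. -/
def zclosure {n : ℕ} (S : Set (Fin n → ℝ)) : Set (Fin n → ℝ) :=
  {x | ∀ p : MvPolynomial (Fin n) ℝ,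
    (∀ y ∈ S, MvPolynomial.eval y p = 0) → MvPolynomial.eval x p = 0}

/-- The `i`-th affine form `p_{i1}z₁ + p_{i2}z₂ + p_{i3}z₃ + p_{i4}` of a camera matrix. -/
def camForm (P : Matrix (Fin 3) (Fin 4) ℝ) (i : Fin 3) (z : Fin 3 → ℝ) : ℝ :=
  P i 0 * z 0 + P i 1 * z 1 + P i 2 * z 2 + P i 3

/-- Image of `Z` under the affine (parallel-projection) map of the camera matrix `P`. -/
def parallelImage (P : Matrix (Fin 3) (Fin 4) ℝ) (Z : Set (Fin 3 → ℝ)) : Set (Fin 2 → ℝ) :=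
  {w | ∃ z ∈ Z, w 0 = camForm P 0 z ∧ w 1 = camForm P 1 z}

/-- `Z` projects to `X` by a parallel projection. -/
def parProjectsTo (Z : Set (Fin 3 → ℝ)) (X : Set (Fin 2 → ℝ)) : Prop :=
  ∃ P : Matrix (Fin 3) (Fin 4) ℝ,
    (∀ j : Fin 4, P 2 j = if j = 3 then 1 else 0) ∧ P.rank = 3 ∧
    X = zclosure (parallelImage P Z)

/-- Affine `A(2)`-equivalence of planar sets. -/
def affEquiv (X₁ X₂ : Set (Fin 2 → ℝ)) : Prop :=
  ∃ (A : Matrix (Fin 2) (Fin 2) ℝ) (b : Fin 2 → ℝ), IsUnit A.det ∧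
    X₂ = (fun x => A.mulVec x + b) '' X₁

/-! ### Auxiliary lemmas -/

lemma eval_bind₁' (x : Fin 2 → ℝ) (g : Fin 2 → MvPolynomial (Fin 2) ℝ) (p : MvPolynomial (Fin 2) ℝ) :
    MvPolynomial.eval x (MvPolynomial.bind₁ g p) =
      MvPolynomial.eval (fun i => MvPolynomial.eval x (g i)) p := by
  have h := MvPolynomial.eval₂Hom_bind₁ (RingHom.id ℝ) x g p
  exact h

/-- Affine map of the plane. -/
def affMap (A : Matrix (Fin 2) (Fin 2) ℝ) (b : Fin 2 → ℝ) : (Fin 2 → ℝ) → (Fin 2 → ℝ) :=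
  fun x => A.mulVec x + b

lemma affMap_apply (A : Matrix (Fin 2) (Fin 2) ℝ) (b x : Fin 2 → ℝ) (i : Fin 2) :
    affMap A b x i = A i 0 * x 0 + A i 1 * x 1 + b i := by
  fin_cases i <;> simp [affMap, Matrix.mulVec, dotProduct, Fin.sum_univ_two]

lemma affMap_mem_zclosure (A : Matrix (Fin 2) (Fin 2) ℝ) (b : Fin 2 → ℝ)
    (S : Set (Fin 2 → ℝ)) {x : Fin 2 → ℝ} (hx : x ∈ zclosure S) :
    affMap A b x ∈ zclosure (affMap A b '' S) := by
  intro p hp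
  have key : ∀ z : Fin 2 → ℝ,
      MvPolynomial.eval z (MvPolynomial.bind₁
        (fun i => MvPolynomial.C (A i 0) * MvPolynomial.X 0 + MvPolynomial.C (A i 1) * MvPolynomial.X 1
          + MvPolynomial.C (b i)) p) = MvPolynomial.eval (affMap A b z) p := by
    intro z
    rw [eval_bind₁']
    have : (fun i => MvPolynomial.eval z
        (MvPolynomial.C (A i 0) * MvPolynomial.X 0 + MvPolynomial.C (A i 1) * MvPolynomial.X 1
          + MvPolynomial.C (b i))) = affMap A b z := by
      funext i
      simp [affMap_apply]
    rw [this]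
  have := hx (MvPolynomial.bind₁
        (fun i => MvPolynomial.C (A i 0) * MvPolynomial.X 0 + MvPolynomial.C (A i 1) * MvPolynomial.X 1
          + MvPolynomial.C (b i)) p) ?_
  · rw [key] at this; exact this
  · intro y hy
    rw [key]
    exact hp _ ⟨y, hy, rfl⟩

lemma affMap_leftInv (A : Matrix (Fin 2) (Fin 2) ℝ) (b : Fin 2 → ℝ) (hA : IsUnit A.det) (x : Fin 2 → ℝ) :
    affMap A⁻¹ (-(A⁻¹.mulVec b)) (affMap A b x) = x := by
  simp only [affMap, Matrix.mulVec_add, Matrix.mulVec_mulVec, Matrix.nonsing_inv_mul A hA,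
    Matrix.one_mulVec, add_neg_cancel_right]

lemma affMap_image_leftInv (A : Matrix (Fin 2) (Fin 2) ℝ) (b : Fin 2 → ℝ) (hA : IsUnit A.det)
    (S : Set (Fin 2 → ℝ)) :
    affMap A⁻¹ (-(A⁻¹.mulVec b)) '' (affMap A b '' S) = S := by
  rw [Set.image_image]
  have : ∀ x, affMap A⁻¹ (-(A⁻¹.mulVec b)) (affMap A b x) = x := affMap_leftInv A b hA
  simp only [this, Set.image_id']

lemma zclosure_affMap (A : Matrix (Fin 2) (Fin 2) ℝ) (b : Fin 2 → ℝ) (hA : IsUnit A.det)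
    (S : Set (Fin 2 → ℝ)) :
    zclosure (affMap A b '' S) = affMap A b '' zclosure S := by
  apply Set.Subset.antisymm
  · intro y hy
    refine ⟨affMap A⁻¹ (-(A⁻¹.mulVec b)) y, ?_, ?_⟩
    · have := affMap_mem_zclosure A⁻¹ (-(A⁻¹.mulVec b)) (affMap A b '' S) hy
      rwa [affMap_image_leftInv A b hA] at this
    · have hInv : IsUnit A⁻¹.det := by
        rw [Matrix.det_nonsing_inv]
        exact isUnit_ringInverse.mpr hA
      have := affMap_leftInv A⁻¹ (-(A⁻¹.mulVec b)) hInv y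
      rw [Matrix.nonsing_inv_nonsing_inv A hA] at this
      have hb : -(A.mulVec (-(A⁻¹.mulVec b))) = b := by
        simp only [Matrix.mulVec_neg, Matrix.mulVec_mulVec, Matrix.mul_nonsing_inv A hA,
          Matrix.one_mulVec, neg_neg]
      rwa [hb] at this
  · rintro _ ⟨x, hx, rfl⟩
    exact affMap_mem_zclosure A b S hx

/-! ### Rank lemmas -/

lemma rank3_iff (P : Matrix (Fin 3) (Fin 4) ℝ) :
    P.rank = 3 ↔ ∀ u : Fin 3 → ℝ, Matrix.vecMul u P = 0 → u = 0 := by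
  have h1 : P.rank = Pᵀ.rank := (Matrix.rank_transpose P).symm
  have h2 : Pᵀ.rank = Module.finrank ℝ (LinearMap.range Pᵀ.mulVecLin) := rfl
  have h3 := LinearMap.finrank_range_add_finrank_ker (Pᵀ.mulVecLin)
  rw [Module.finrank_fin_fun] at h3
  have hker : (∀ u : Fin 3 → ℝ, Matrix.vecMul u P = 0 → u = 0) ↔
      LinearMap.ker Pᵀ.mulVecLin = ⊥ := by
    rw [LinearMap.ker_eq_bot']
    constructor
    · intro h u hu
      exact h u (by rw [← Matrix.mulVec_transpose]; exact hu)
    · intro h u hu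
      exact h u (by rw [Matrix.mulVecLin_apply, Matrix.mulVec_transpose]; exact hu)
  rw [h1, h2, hker]
  constructor
  · intro h
    have : Module.finrank ℝ (LinearMap.ker Pᵀ.mulVecLin) = 0 := by omega
    exact Submodule.finrank_eq_zero.mp this
  · intro h
    rw [h] at h3
    simpa using h3

/-! ### The camera matrix with prescribed top block -/

def bigP (M : Matrix (Fin 2) (Fin 3) ℝ) (t : Fin 2 → ℝ) : Matrix (Fin 3) (Fin 4) ℝ :=
  !![M 0 0, M 0 1, M 0 2, t 0; M 1 0, M 1 1, M 1 2, t 1; 0, 0, 0, 1]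

lemma bigP_row2 (M : Matrix (Fin 2) (Fin 3) ℝ) (t : Fin 2 → ℝ) (j : Fin 4) :
    bigP M t 2 j = if j = 3 then 1 else 0 := by
  fin_cases j <;> simp [bigP]

lemma camForm_bigP (M : Matrix (Fin 2) (Fin 3) ℝ) (t : Fin 2 → ℝ) (r : Fin 2) (z : Fin 3 → ℝ) :
    camForm (bigP M t) (Fin.castSucc r) z = M.mulVec z r + t r := by
  fin_cases r <;>
    simp [camForm, bigP, Matrix.mulVec, dotProduct, Fin.sum_univ_three]

lemma parallelImage_bigP (M : Matrix (Fin 2) (Fin 3) ℝ) (t : Fin 2 → ℝ) (Z : Set (Fin 3 → ℝ)) :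
    parallelImage (bigP M t) Z = (fun z => M.mulVec z + t) '' Z := by
  ext w
  constructor
  · rintro ⟨z, hz, h0, h1⟩
    refine ⟨z, hz, ?_⟩
    funext r
    show M.mulVec z r + t r = w r
    fin_cases r
    · show M.mulVec z 0 + t 0 = w 0
      rw [← camForm_bigP M t 0 z]; exact h0.symm
    · show M.mulVec z 1 + t 1 = w 1
      rw [← camForm_bigP M t 1 z]; exact h1.symm
  · rintro ⟨z, hz, rfl⟩
    exact ⟨z, hz, (camForm_bigP M t 0 z).symm, (camForm_bigP M t 1 z).symm⟩

lemma vecMul_bigP (M : Matrix (Fin 2) (Fin 3) ℝ) (t : Fin 2 → ℝ) (u : Fin 3 → ℝ) (c : Fin 4) :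
    Matrix.vecMul u (bigP M t) c =
      u 0 * bigP M t 0 c + u 1 * bigP M t 1 c + u 2 * bigP M t 2 c := by
  simp [Matrix.vecMul, dotProduct, Fin.sum_univ_three]

lemma rank_bigP (M : Matrix (Fin 2) (Fin 3) ℝ) (t : Fin 2 → ℝ)
    (hM : ∀ v : Fin 2 → ℝ, Matrix.vecMul v M = 0 → v = 0) :
    (bigP M t).rank = 3 := by
  rw [rank3_iff]
  intro u hu
  have hc : ∀ c : Fin 4, u 0 * bigP M t 0 c + u 1 * bigP M t 1 c + u 2 * bigP M t 2 c = 0 := by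
    intro c
    rw [← vecMul_bigP, hu]
    rfl
  have hv : Matrix.vecMul ![u 0, u 1] M = 0 := by
    funext c
    have : Matrix.vecMul ![u 0, u 1] M c = u 0 * M 0 c + u 1 * M 1 c := by
      simp [Matrix.vecMul, dotProduct, Fin.sum_univ_two]
    rw [this]
    fin_cases c
    · have := hc 0; simpa [bigP] using this
    · have := hc 1; simpa [bigP] using this
    · have := hc 2; simpa [bigP] using this
  have hv0 := congrFun (hM _ hv) 0
  have hv1 := congrFun (hM _ hv) 1
  simp at hv0 hv1
  have h3 := hc 3
  simp [bigP, hv0, hv1] at h3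
  funext r
  fin_cases r
  · exact hv0
  · exact hv1
  · exact h3

/-! ### Dependence from vanishing minors -/

lemma minors_dep (a b : Fin 3 → ℝ)
    (h01 : a 0 * b 1 - a 1 * b 0 = 0)
    (h02 : a 0 * b 2 - a 2 * b 0 = 0)
    (h12 : a 1 * b 2 - a 2 * b 1 = 0) :
    ∃ u : Fin 2 → ℝ, u ≠ 0 ∧ ∀ j : Fin 3, u 0 * a j + u 1 * b j = 0 := by
  by_cases ha : a = 0
  · refine ⟨![1, 0], ?_, ?_⟩
    · intro h; have := congrFun h 0; simp at this
    · intro j; simp [ha]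
  · have : ∃ i : Fin 3, a i ≠ 0 := by
      by_contra h
      push_neg at h
      exact ha (funext fun i => h i)
    obtain ⟨i, hi⟩ := this
    refine ⟨![b i, -(a i)], ?_, ?_⟩
    · intro h; have := congrFun h 1; simp at this; exact hi this
    · intro j
      show b i * a j + (-(a i)) * b j = 0
      fin_cases i <;> fin_cases j <;> simp at * <;> nlinarith [h01, h02, h12]

/-! ### The standard sets -/

lemma pair_eq (w : Fin 2 → ℝ) (a b : ℝ) : (w 0 = a ∧ w 1 = b) ↔ w = ![a, b] := by
  constructor
  · rintro ⟨h0, h1⟩; funext r; fin_cases r <;> simpa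
  · rintro rfl; simp

lemma stdSet_eq (Z : Set (Fin 3 → ℝ)) (S : Matrix (Fin 2) (Fin 3) ℝ) (i j k : Fin 3) (c₁ c₂ : ℝ)
    (hS : ∀ z : Fin 3 → ℝ, S.mulVec z = ![z i + c₁ * z k, z j + c₂ * z k]) :
    {w : Fin 2 → ℝ | ∃ z ∈ Z, w 0 = z i + c₁ * z k ∧ w 1 = z j + c₂ * z k} =
      (fun z => S.mulVec z) '' Z := by
  ext w
  simp only [Set.mem_setOf_eq, Set.mem_image]
  constructor
  · rintro ⟨z, hz, h0, h1⟩
    exact ⟨z, hz, by rw [hS]; exact ((pair_eq w _ _).mp ⟨h0, h1⟩).symm⟩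
  · rintro ⟨z, hz, rfl⟩
    have := (pair_eq (S.mulVec z) (z i + c₁ * z k) (z j + c₂ * z k)).mpr (hS z)
    exact ⟨z, hz, this⟩

/-! ### The generic forward core -/

lemma forward_core (Z : Set (Fin 3 → ℝ)) (M : Matrix (Fin 2) (Fin 3) ℝ) (t : Fin 2 → ℝ)
    (i j k : Fin 3) (c₁ c₂ : ℝ) (S : Matrix (Fin 2) (Fin 3) ℝ) (A : Matrix (Fin 2) (Fin 2) ℝ)
    (hA : IsUnit A.det)
    (hSmul : ∀ z : Fin 3 → ℝ, S.mulVec z = ![z i + c₁ * z k, z j + c₂ * z k])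
    (hM : M = A * S) :
    affEquiv (zclosure (parallelImage (bigP M t) Z))
      (zclosure {w : Fin 2 → ℝ | ∃ z ∈ Z, w 0 = z i + c₁ * z k ∧ w 1 = z j + c₂ * z k}) := by
  have himg : parallelImage (bigP M t) Z = affMap A t '' ((fun z => S.mulVec z) '' Z) := by
    rw [parallelImage_bigP, Set.image_image]
    apply Set.image_congr'
    intro z
    simp [affMap, Matrix.mulVec_mulVec, hM]
  have hstd := stdSet_eq Z S i j k c₁ c₂ hSmul
  refine ⟨A⁻¹, -(A⁻¹.mulVec t), ?_, ?_⟩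
  · rw [Matrix.det_nonsing_inv]
    exact isUnit_ringInverse.mpr hA
  · rw [himg, zclosure_affMap A t hA, hstd]
    exact (affMap_image_leftInv A t hA _).symm

/-! ### The generic backward core -/

lemma backward_core (Z : Set (Fin 3 → ℝ)) (X : Set (Fin 2 → ℝ))
    (i j k : Fin 3) (c₁ c₂ : ℝ) (S : Matrix (Fin 2) (Fin 3) ℝ)
    (hSmul : ∀ z : Fin 3 → ℝ, S.mulVec z = ![z i + c₁ * z k, z j + c₂ * z k])
    (hSinj : ∀ v : Fin 2 → ℝ, Matrix.vecMul v S = 0 → v = 0)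
    (A : Matrix (Fin 2) (Fin 2) ℝ) (b : Fin 2 → ℝ) (hA : IsUnit A.det)
    (hX : zclosure {w : Fin 2 → ℝ | ∃ z ∈ Z, w 0 = z i + c₁ * z k ∧ w 1 = z j + c₂ * z k} =
      affMap A b '' X) :
    parProjectsTo Z X := by
  refine ⟨bigP (A⁻¹ * S) (-(A⁻¹.mulVec b)), bigP_row2 _ _, ?_, ?_⟩
  · apply rank_bigP
    intro v hv
    rw [← Matrix.vecMul_vecMul] at hv
    have h1 : Matrix.vecMul v A⁻¹ = 0 := hSinj _ hv
    have : Matrix.vecMul (Matrix.vecMul v A⁻¹) A = Matrix.vecMul v (A⁻¹ * A) :=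
      Matrix.vecMul_vecMul v A⁻¹ A
    rw [h1, Matrix.nonsing_inv_mul A hA, Matrix.vecMul_one] at this
    rw [← this]
    simp [Matrix.vecMul]
  · have himg : parallelImage (bigP (A⁻¹ * S) (-(A⁻¹.mulVec b))) Z =
        affMap A⁻¹ (-(A⁻¹.mulVec b)) '' ((fun z => S.mulVec z) '' Z) := by
      rw [parallelImage_bigP, Set.image_image]
      apply Set.image_congr'
      intro z
      simp [affMap, Matrix.mulVec_mulVec]
    have hInv : IsUnit A⁻¹.det := by
      rw [Matrix.det_nonsing_inv]
      exact isUnit_ringInverse.mpr hA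
    rw [himg, zclosure_affMap A⁻¹ (-(A⁻¹.mulVec b)) hInv, ← stdSet_eq Z S i j k c₁ c₂ hSmul, hX]
    exact (affMap_image_leftInv A b hA X).symm


lemma S1_mulVec (c₁ c₂ : ℝ) (z : Fin 3 → ℝ) :
    (!![1, 0, c₁; 0, 1, c₂] : Matrix (Fin 2) (Fin 3) ℝ).mulVec z
      = ![z 0 + c₁ * z 2, z 1 + c₂ * z 2] := by
  funext r
  fin_cases r <;> simp [Matrix.mulVec, dotProduct, Fin.sum_univ_three]

lemma S1_inj (c₁ c₂ : ℝ) (v : Fin 2 → ℝ)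
    (h : Matrix.vecMul v (!![1, 0, c₁; 0, 1, c₂] : Matrix (Fin 2) (Fin 3) ℝ) = 0) : v = 0 := by
  have h0 := congrFun h 0
  have h1 := congrFun h 1
  simp [Matrix.vecMul, dotProduct, Fin.sum_univ_two] at h0 h1
  funext r
  fin_cases r <;> simpa

lemma S2_mulVec (c₁ c₂ : ℝ) (z : Fin 3 → ℝ) :
    (!![1, c₁, 0; 0, c₂, 1] : Matrix (Fin 2) (Fin 3) ℝ).mulVec z
      = ![z 0 + c₁ * z 1, z 2 + c₂ * z 1] := by
  funext r
  fin_cases r <;> simp [Matrix.mulVec, dotProduct, Fin.sum_univ_three] <;> ring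

lemma S2_inj (c₁ c₂ : ℝ) (v : Fin 2 → ℝ)
    (h : Matrix.vecMul v (!![1, c₁, 0; 0, c₂, 1] : Matrix (Fin 2) (Fin 3) ℝ) = 0) : v = 0 := by
  have h0 := congrFun h 0
  have h1 := congrFun h 2
  simp [Matrix.vecMul, dotProduct, Fin.sum_univ_two] at h0 h1
  funext r
  fin_cases r <;> simpa

lemma S3_mulVec (c₁ c₂ : ℝ) (z : Fin 3 → ℝ) :
    (!![c₁, 1, 0; c₂, 0, 1] : Matrix (Fin 2) (Fin 3) ℝ).mulVec z
      = ![z 1 + c₁ * z 0, z 2 + c₂ * z 0] := by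
  funext r
  fin_cases r <;> simp [Matrix.mulVec, dotProduct, Fin.sum_univ_three] <;> ring

lemma S3_inj (c₁ c₂ : ℝ) (v : Fin 2 → ℝ)
    (h : Matrix.vecMul v (!![c₁, 1, 0; c₂, 0, 1] : Matrix (Fin 2) (Fin 3) ℝ) = 0) : v = 0 := by
  have h0 := congrFun h 1
  have h1 := congrFun h 2
  simp [Matrix.vecMul, dotProduct, Fin.sum_univ_two] at h0 h1
  funext r
  fin_cases r <;> simpa


/-! ### Factorizations of a rank-2 top block -/

lemma case1_factor (M : Matrix (Fin 2) (Fin 3) ℝ) (h : M 0 0 * M 1 1 - M 0 1 * M 1 0 ≠ 0) :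
    ∃ (A : Matrix (Fin 2) (Fin 2) ℝ) (c : Fin 2 → ℝ), IsUnit A.det ∧
      M = A * !![1, 0, c 0; 0, 1, c 1] := by
  set A : Matrix (Fin 2) (Fin 2) ℝ := !![M 0 0, M 0 1; M 1 0, M 1 1] with hAdef
  have hdet : A.det = M 0 0 * M 1 1 - M 0 1 * M 1 0 := by rw [hAdef, Matrix.det_fin_two_of]
  have hA : IsUnit A.det := isUnit_iff_ne_zero.mpr (by rw [hdet]; exact h)
  set c : Fin 2 → ℝ := A⁻¹.mulVec ![M 0 2, M 1 2] with hcdef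
  have hc : A.mulVec c = ![M 0 2, M 1 2] := by
    rw [hcdef, Matrix.mulVec_mulVec, Matrix.mul_nonsing_inv A hA, Matrix.one_mulVec]
  have h0 := congrFun hc 0
  have h1 := congrFun hc 1
  simp [hAdef, Matrix.mulVec, dotProduct, Fin.sum_univ_two] at h0 h1
  refine ⟨A, c, hA, ?_⟩
  ext r c'
  fin_cases r <;> fin_cases c' <;>
    simp [hAdef, Matrix.mul_apply, Fin.sum_univ_two] <;> linarith

lemma case2_factor (M : Matrix (Fin 2) (Fin 3) ℝ) (h : M 0 0 * M 1 2 - M 0 2 * M 1 0 ≠ 0) :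
    ∃ (A : Matrix (Fin 2) (Fin 2) ℝ) (c : Fin 2 → ℝ), IsUnit A.det ∧
      M = A * !![1, c 0, 0; 0, c 1, 1] := by
  set A : Matrix (Fin 2) (Fin 2) ℝ := !![M 0 0, M 0 2; M 1 0, M 1 2] with hAdef
  have hdet : A.det = M 0 0 * M 1 2 - M 0 2 * M 1 0 := by rw [hAdef, Matrix.det_fin_two_of]
  have hA : IsUnit A.det := isUnit_iff_ne_zero.mpr (by rw [hdet]; exact h)
  set c : Fin 2 → ℝ := A⁻¹.mulVec ![M 0 1, M 1 1] with hcdef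
  have hc : A.mulVec c = ![M 0 1, M 1 1] := by
    rw [hcdef, Matrix.mulVec_mulVec, Matrix.mul_nonsing_inv A hA, Matrix.one_mulVec]
  have h0 := congrFun hc 0
  have h1 := congrFun hc 1
  simp [hAdef, Matrix.mulVec, dotProduct, Fin.sum_univ_two] at h0 h1
  refine ⟨A, c, hA, ?_⟩
  ext r c'
  fin_cases r <;> fin_cases c' <;>
    simp [hAdef, Matrix.mul_apply, Fin.sum_univ_two] <;> linarith

lemma case3_factor (M : Matrix (Fin 2) (Fin 3) ℝ) (h : M 0 1 * M 1 2 - M 0 2 * M 1 1 ≠ 0) :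
    ∃ (A : Matrix (Fin 2) (Fin 2) ℝ) (c : Fin 2 → ℝ), IsUnit A.det ∧
      M = A * !![c 0, 1, 0; c 1, 0, 1] := by
  set A : Matrix (Fin 2) (Fin 2) ℝ := !![M 0 1, M 0 2; M 1 1, M 1 2] with hAdef
  have hdet : A.det = M 0 1 * M 1 2 - M 0 2 * M 1 1 := by rw [hAdef, Matrix.det_fin_two_of]
  have hA : IsUnit A.det := isUnit_iff_ne_zero.mpr (by rw [hdet]; exact h)
  set c : Fin 2 → ℝ := A⁻¹.mulVec ![M 0 0, M 1 0] with hcdef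
  have hc : A.mulVec c = ![M 0 0, M 1 0] := by
    rw [hcdef, Matrix.mulVec_mulVec, Matrix.mul_nonsing_inv A hA, Matrix.one_mulVec]
  have h0 := congrFun hc 0
  have h1 := congrFun hc 1
  simp [hAdef, Matrix.mulVec, dotProduct, Fin.sum_univ_two] at h0 h1
  refine ⟨A, c, hA, ?_⟩
  ext r c'
  fin_cases r <;> fin_cases c' <;>
    simp [hAdef, Matrix.mul_apply, Fin.sum_univ_two] <;> linarith

/-! ### Not all minors vanish -/

lemma minors_ne (M : Matrix (Fin 2) (Fin 3) ℝ) (t : Fin 2 → ℝ)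
    (hinj : ∀ u : Fin 3 → ℝ, Matrix.vecMul u (bigP M t) = 0 → u = 0) :
    M 0 0 * M 1 1 - M 0 1 * M 1 0 ≠ 0 ∨ M 0 0 * M 1 2 - M 0 2 * M 1 0 ≠ 0 ∨
      M 0 1 * M 1 2 - M 0 2 * M 1 1 ≠ 0 := by
  by_contra hcon
  push_neg at hcon
  obtain ⟨h1, h2, h3⟩ := hcon
  obtain ⟨u, hu0, hu⟩ := minors_dep (fun c => M 0 c) (fun c => M 1 c) h1 h2 h3
  set u3 : Fin 3 → ℝ := ![u 0, u 1, -(u 0 * t 0 + u 1 * t 1)] with hu3def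
  have hz : Matrix.vecMul u3 (bigP M t) = 0 := by
    funext col
    rw [vecMul_bigP]
    have e0 := hu 0; have e1 := hu 1; have e2 := hu 2
    fin_cases col <;> simp [hu3def, bigP] <;> linarith
  have := hinj u3 hz
  have hu0' := congrFun this 0
  have hu1' := congrFun this 1
  simp [hu3def] at hu0' hu1'
  apply hu0
  funext r
  fin_cases r
  · exact hu0'
  · exact hu1'

theorem parallel_projection_criterion (Z : Set (Fin 3 → ℝ)) (X : Set (Fin 2 → ℝ)) :
    parProjectsTo Z X ↔
      ∃ (c₁ c₂ : ℝ) (ijk : Fin 3 × Fin 3 × Fin 3),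
        (ijk = (0, 1, 2) ∨ ijk = (0, 2, 1) ∨ ijk = (1, 2, 0)) ∧
        affEquiv X (zclosure {w | ∃ z ∈ Z,
          w 0 = z ijk.1 + c₁ * z ijk.2.2 ∧ w 1 = z ijk.2.1 + c₂ * z ijk.2.2}) := by
  constructor
  · rintro ⟨P, hrow, hrank, hX⟩
    set M : Matrix (Fin 2) (Fin 3) ℝ :=
      Matrix.of ![![P 0 0, P 0 1, P 0 2], ![P 1 0, P 1 1, P 1 2]] with hMdef
    set t : Fin 2 → ℝ := ![P 0 3, P 1 3] with htdef
    have hPB : P = bigP M t := by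
      ext r c
      fin_cases r
      · fin_cases c <;> simp [bigP, hMdef, htdef]
      · fin_cases c <;> simp [bigP, hMdef, htdef]
      · show P 2 c = bigP M t 2 c
        rw [hrow c, bigP_row2]
    rw [hPB] at hrank hX
    have hinj := (rank3_iff _).mp hrank
    rcases minors_ne M t hinj with h | h | h
    · obtain ⟨A, c, hA, hM⟩ := case1_factor M h
      refine ⟨c 0, c 1, (0, 1, 2), Or.inl rfl, ?_⟩
      rw [hX]
      exact forward_core Z M t 0 1 2 (c 0) (c 1) _ A hA (S1_mulVec (c 0) (c 1)) hM
    · obtain ⟨A, c, hA, hM⟩ := case2_factor M h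
      refine ⟨c 0, c 1, (0, 2, 1), Or.inr (Or.inl rfl), ?_⟩
      rw [hX]
      exact forward_core Z M t 0 2 1 (c 0) (c 1) _ A hA (S2_mulVec (c 0) (c 1)) hM
    · obtain ⟨A, c, hA, hM⟩ := case3_factor M h
      refine ⟨c 0, c 1, (1, 2, 0), Or.inr (Or.inr rfl), ?_⟩
      rw [hX]
      exact forward_core Z M t 1 2 0 (c 0) (c 1) _ A hA (S3_mulVec (c 0) (c 1)) hM
  · rintro ⟨c₁, c₂, ijk, (rfl | rfl | rfl), A, b, hA, hXeq⟩
    · exact backward_core Z X 0 1 2 c₁ c₂ _ (S1_mulVec c₁ c₂) (S1_inj c₁ c₂) A b hA hXeq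
    · exact backward_core Z X 0 2 1 c₁ c₂ _ (S2_mulVec c₁ c₂) (S2_inj c₁ c₂) A b hA hXeq
    · exact backward_core Z X 1 2 0 c₁ c₂ _ (S3_mulVec c₁ c₂) (S3_inj c₁ c₂) A b hA hXeq

end
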